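/- If ρ*_S is a global fixed point, i.e., U(ρ*_S ⊗ ρ_E)U† = ρ*_S ⊗ ρ_E, then the entropy production satisfies Σ = S(ρ_S ‖ ρ*_S) − S(ρ'_S ‖ ρ*_S), and in particular S(ρ'_S ‖ ρ*_S) ≤ S(ρ_S ‖ ρ*_S). -/

import Mathlib

/-!
Write `ρ' = U (ρS ⊗ ρE) U†`. Unitary invariance of `Tr ρ log ρ` and the additivity
`log (A ⊗ B) = log A ⊗ 1 + 1 ⊗ log B` give `Σ = S(ρ' ‖ ρ'_S ⊗ ρE)`, which is nonnegative by
Klein's inequality. If `U` fixes `ρ*_S ⊗ ρE` it commutes with `log ρ*_S ⊗ 1 + 1 ⊗ log ρE`, so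
`Tr ρ'_S log ρ*_S + Tr ρ'_E log ρE = Tr ρS log ρ*_S + Tr ρE log ρE`; substituting this into `Σ`
gives `Σ = S(ρS‖ρ*_S) - S(ρ'_S‖ρ*_S)`, and the monotonicity follows from `Σ ≥ 0`.

Logarithms are computed from arbitrary unitary diagonalisations: `log A = q(A)` for any polynomial
`q` interpolating `log` on the spectrum of `A`.
-/

open Matrix Kronecker BigOperators
open scoped ComplexOrder

noncomputable section

/-- Matrix logarithm of a Hermitian matrix, defined via the spectral decomposition
(junk value `0` for non-Hermitian input). -/
def matLog {n : Type*} [Fintype n] [DecidableEq n] (A : Matrix n n ℂ) : Matrix n n ℂ :=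
  if h : A.IsHermitian then
    (h.eigenvectorUnitary : Matrix n n ℂ) *
      Matrix.diagonal (fun i => (Real.log (h.eigenvalues i) : ℂ)) *
      (star (h.eigenvectorUnitary : Matrix n n ℂ))
  else 0

/-- Von Neumann entropy `S(ρ) = -Tr(ρ log ρ)`. -/
def vnEntropy {n : Type*} [Fintype n] [DecidableEq n] (ρ : Matrix n n ℂ) : ℝ :=
  (-(ρ * matLog ρ).trace).re

/-- Quantum relative entropy `S(ρ‖σ) = Tr(ρ log ρ - ρ log σ)`. -/
def relEnt {n : Type*} [Fintype n] [DecidableEq n] (ρ σ : Matrix n n ℂ) : ℝ :=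
  ((ρ * matLog ρ - ρ * matLog σ).trace).re

/-- Partial trace over the environment (second factor). -/
def ptrE {s e : Type*} [Fintype s] [Fintype e]
    (ρ : Matrix (s × e) (s × e) ℂ) : Matrix s s ℂ :=
  Matrix.of fun i j => ∑ k, ρ (i, k) (j, k)

/-- Partial trace over the system (first factor). -/
def ptrS {s e : Type*} [Fintype s] [Fintype e]
    (ρ : Matrix (s × e) (s × e) ℂ) : Matrix e e ℂ :=
  Matrix.of fun i j => ∑ k, ρ (k, i) (k, j)

/-- Quantum mutual information `I(S:E)_ρ = S(ρ_S) + S(ρ_E) - S(ρ_SE)`. -/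
def mutInfo {s e : Type*} [Fintype s] [DecidableEq s] [Fintype e] [DecidableEq e]
    (ρ : Matrix (s × e) (s × e) ℂ) : ℝ :=
  vnEntropy (ptrE ρ) + vnEntropy (ptrS ρ) - vnEntropy ρ

section MatrixLemmas

variable {R n m : Type*}

lemma kronecker_conj_kronecker [CommSemiring R] [StarRing R] [Fintype n] [Fintype m]
    (V : Matrix n n R) (W : Matrix m m R) (X : Matrix n n R) (Y : Matrix m m R) :
    (V ⊗ₖ W) * (X ⊗ₖ Y) * (V ⊗ₖ W)ᴴ = (V * X * Vᴴ) ⊗ₖ (W * Y * Wᴴ) := by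
  rw [conjTranspose_kronecker, ← mul_kronecker_mul, ← mul_kronecker_mul]

lemma diagonal_add_eq_kronecker_one_add_one_kronecker [Semiring R] [DecidableEq n]
    [DecidableEq m] (a : n → R) (b : m → R) :
    diagonal (fun p : n × m => a p.1 + b p.2) = diagonal a ⊗ₖ 1 + 1 ⊗ₖ diagonal b := by
  rw [← diagonal_one, ← diagonal_one, diagonal_kronecker_diagonal, diagonal_kronecker_diagonal,
    diagonal_add]
  simp

lemma diagonal_ofReal_kronecker_diagonal_ofReal [DecidableEq n] [DecidableEq m] (a : n → ℝ)
    (b : m → ℝ) :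
    diagonal (fun i => (a i : ℂ)) ⊗ₖ diagonal (fun j => (b j : ℂ))
      = diagonal (fun p : n × m => ((a p.1 * b p.2 : ℝ) : ℂ)) := by
  rw [diagonal_kronecker_diagonal]
  push_cast
  rfl

lemma trace_unitary_conj [CommRing R] [StarRing R] [Fintype n] [DecidableEq n]
    {U : Matrix n n R} (hU : U ∈ unitaryGroup n R) (X : Matrix n n R) :
    (U * X * Uᴴ).trace = X.trace := by
  rw [trace_mul_cycle, ← star_eq_conjTranspose, mem_unitaryGroup_iff'.mp hU, Matrix.one_mul]

lemma Matrix.PosDef.unitary_conj [Fintype n] [DecidableEq n] {U A : Matrix n n ℂ}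
    (hA : A.PosDef) (hU : U ∈ unitaryGroup n ℂ) : (U * A * Uᴴ).PosDef :=
  (IsUnit.posDef_star_right_conjugate_iff (Unitary.isUnit_coe (U := ⟨U, hU⟩))).mpr hA

lemma Matrix.nonempty_of_trace_ne_zero [AddCommMonoid R] [Fintype n] {A : Matrix n n R}
    (hA : A.trace ≠ 0) : Nonempty n := by
  by_contra h
  have := not_nonempty_iff.mp h
  exact hA (trace_eq_zero_of_isEmpty A)

end MatrixLemmas

section MatrixLog

open Polynomial

variable {n m : Type*} [Fintype n] [DecidableEq n] [Fintype m] [DecidableEq m]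

lemma Matrix.IsHermitian.eq_unitary_conj_diagonal {A : Matrix n n ℂ} (hA : A.IsHermitian) :
    A = (hA.eigenvectorUnitary : Matrix n n ℂ) * diagonal (fun i => (hA.eigenvalues i : ℂ)) *
      (hA.eigenvectorUnitary : Matrix n n ℂ)ᴴ := by
  conv_lhs => rw [hA.spectral_theorem]
  simp [Function.comp_def, star_eq_conjTranspose]

lemma matLog_of_isHermitian {A : Matrix n n ℂ} (hA : A.IsHermitian) :
    matLog A = (hA.eigenvectorUnitary : Matrix n n ℂ) *
      diagonal (fun i => (Real.log (hA.eigenvalues i) : ℂ)) *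
      (hA.eigenvectorUnitary : Matrix n n ℂ)ᴴ := by
  rw [matLog, dif_pos hA, star_eq_conjTranspose]

lemma aeval_unitary_conj_diagonal {U : Matrix n n ℂ} (hU : U ∈ unitaryGroup n ℂ) (c : n → ℂ)
    (q : ℂ[X]) : aeval (U * diagonal c * Uᴴ) q = U * diagonal (fun i => q.eval (c i)) * Uᴴ := by
  have h := aeval_algHom_apply
    ((Unitary.conjStarAlgAut ℂ _ ⟨U, hU⟩).toAlgEquiv.toAlgHom.comp (diagonalAlgHom ℂ)) c q
  have hc : aeval c q = fun i => q.eval (c i) := by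
    funext i
    simp [aeval_def, eval₂_eq_eval_map]
  rw [hc] at h
  exact h

lemma exists_polynomial_eval_ofReal_eq (f : ℝ → ℝ) (T : Finset ℝ) :
    ∃ q : ℂ[X], ∀ x ∈ T, q.eval (x : ℂ) = f x :=
  ⟨(Lagrange.interpolate T id f).map (algebraMap ℝ ℂ), fun x hx => by
    rw [← Complex.coe_algebraMap, eval_map_algebraMap, aeval_algebraMap_apply_eq_algebraMap_eval,
      ← id_eq x, Lagrange.eval_interpolate_at_node _ (Set.injOn_id _) hx]
    rfl⟩

lemma matLog_unitary_conj_diagonal {U : Matrix n n ℂ} (hU : U ∈ unitaryGroup n ℂ) (d : n → ℝ) :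
    matLog (U * diagonal (fun i => (d i : ℂ)) * Uᴴ)
      = U * diagonal (fun i => (Real.log (d i) : ℂ)) * Uᴴ := by
  set M := U * diagonal (fun i => (d i : ℂ)) * Uᴴ
  have hM : M.IsHermitian := isHermitian_mul_mul_conjTranspose U <|
    isHermitian_diagonal_of_self_adjoint _ <| funext fun i => Complex.conj_ofReal (d i)
  -- both sides are `q(M)` for a polynomial `q` interpolating `log` on both diagonals
  obtain ⟨q, hq⟩ := exists_polynomial_eval_ofReal_eq Real.log
    (Finset.univ.image hM.eigenvalues ∪ Finset.univ.image d)
  have hlogM : matLog M = aeval M q := by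
    conv_rhs => rw [hM.eq_unitary_conj_diagonal]
    rw [matLog_of_isHermitian hM, aeval_unitary_conj_diagonal hM.eigenvectorUnitary.2]
    congr 3 with i
    exact (hq _ (Finset.mem_union_left _ (Finset.mem_image_of_mem _ (Finset.mem_univ i)))).symm
  rw [hlogM, aeval_unitary_conj_diagonal hU]
  congr 3 with i
  exact hq _ (Finset.mem_union_right _ (Finset.mem_image_of_mem _ (Finset.mem_univ i)))

lemma matLog_unitary_conj {U A : Matrix n n ℂ} (hU : U ∈ unitaryGroup n ℂ)
    (hA : A.IsHermitian) : matLog (U * A * Uᴴ) = U * matLog A * Uᴴ := by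
  set V : Matrix n n ℂ := ↑hA.eigenvectorUnitary
  have hV : V ∈ unitaryGroup n ℂ := hA.eigenvectorUnitary.2
  have hconj : ∀ X : Matrix n n ℂ, U * (V * X * Vᴴ) * Uᴴ = (U * V) * X * (U * V)ᴴ := by
    intro X
    simp only [conjTranspose_mul, Matrix.mul_assoc]
  rw [hA.eq_unitary_conj_diagonal, hconj, matLog_unitary_conj_diagonal (mul_mem hU hV),
    matLog_unitary_conj_diagonal hV, hconj]

lemma matLog_kronecker {A : Matrix n n ℂ} {B : Matrix m m ℂ} (hA : A.PosDef) (hB : B.PosDef) :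
    matLog (A ⊗ₖ B) = matLog A ⊗ₖ 1 + 1 ⊗ₖ matLog B := by
  set V : Matrix n n ℂ := ↑hA.1.eigenvectorUnitary
  set W : Matrix m m ℂ := ↑hB.1.eigenvectorUnitary
  have hV : V ∈ unitaryGroup n ℂ := hA.1.eigenvectorUnitary.2
  have hW : W ∈ unitaryGroup m ℂ := hB.1.eigenvectorUnitary.2
  have hlog : ∀ p : n × m, Real.log (hA.1.eigenvalues p.1 * hB.1.eigenvalues p.2)
      = Real.log (hA.1.eigenvalues p.1) + Real.log (hB.1.eigenvalues p.2) := fun p =>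
    Real.log_mul (hA.eigenvalues_pos p.1).ne' (hB.eigenvalues_pos p.2).ne'
  have hVV : V * Vᴴ = 1 := mem_unitaryGroup_iff.mp hV
  have hWW : W * Wᴴ = 1 := mem_unitaryGroup_iff.mp hW
  rw [hA.1.eq_unitary_conj_diagonal, hB.1.eq_unitary_conj_diagonal, ← kronecker_conj_kronecker,
    diagonal_ofReal_kronecker_diagonal_ofReal,
    matLog_unitary_conj_diagonal (kronecker_mem_unitary hV hW), matLog_unitary_conj_diagonal hV,
    matLog_unitary_conj_diagonal hW]
  simp only [hlog, Complex.ofReal_add]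
  rw [diagonal_add_eq_kronecker_one_add_one_kronecker (fun i => (Real.log (hA.1.eigenvalues i) : ℂ))
    (fun j => (Real.log (hB.1.eigenvalues j) : ℂ)), Matrix.mul_add, Matrix.add_mul,
    kronecker_conj_kronecker, kronecker_conj_kronecker, Matrix.mul_one, Matrix.mul_one, hVV, hWW]

lemma trace_unitary_conj_mul_matLog_unitary_conj {U X Y : Matrix n n ℂ}
    (hU : U ∈ unitaryGroup n ℂ) (hY : Y.IsHermitian) :
    ((U * X * Uᴴ) * matLog (U * Y * Uᴴ)).trace = (X * matLog Y).trace := by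
  have hUU : Uᴴ * U = 1 := by rw [← star_eq_conjTranspose]; exact mem_unitaryGroup_iff'.mp hU
  rw [matLog_unitary_conj hU hY, ← trace_unitary_conj hU (X * matLog Y)]
  simp only [Matrix.mul_assoc]
  rw [← Matrix.mul_assoc Uᴴ U, hUU, Matrix.one_mul]

end MatrixLog

section PartialTrace

variable {s e : Type*} [Fintype s] [Fintype e]

lemma trace_ptrE (ρ : Matrix (s × e) (s × e) ℂ) : (ptrE ρ).trace = ρ.trace := by
  simp only [trace, diag_apply, ptrE, of_apply, Fintype.sum_prod_type]

lemma ptrE_kronecker (A : Matrix s s ℂ) (B : Matrix e e ℂ) : ptrE (A ⊗ₖ B) = B.trace • A := by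
  ext i j
  simp [ptrE, trace, Finset.mul_sum, mul_comm]

lemma ptrS_kronecker (A : Matrix s s ℂ) (B : Matrix e e ℂ) : ptrS (A ⊗ₖ B) = A.trace • B := by
  ext i j
  simp [ptrS, trace, Finset.sum_mul]

lemma trace_mul_kronecker_one [DecidableEq e] (ρ : Matrix (s × e) (s × e) ℂ)
    (A : Matrix s s ℂ) : (ρ * (A ⊗ₖ 1)).trace = (ptrE ρ * A).trace := by
  simp only [trace, diag_apply, mul_apply, ptrE, of_apply, kroneckerMap_apply, one_apply,
    Fintype.sum_prod_type, Finset.sum_mul, mul_ite, mul_one, mul_zero, Finset.sum_ite_eq',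
    Finset.mem_univ, if_true]
  exact Finset.sum_congr rfl fun _ _ => Finset.sum_comm

lemma trace_mul_one_kronecker [DecidableEq s] (ρ : Matrix (s × e) (s × e) ℂ)
    (B : Matrix e e ℂ) : (ρ * (1 ⊗ₖ B)).trace = (ptrS ρ * B).trace := by
  simp only [trace, diag_apply, mul_apply, ptrS, of_apply, kroneckerMap_apply, one_apply,
    Fintype.sum_prod_type, Finset.sum_mul, ite_mul, one_mul, zero_mul, mul_ite, mul_zero]
  rw [Finset.sum_comm]
  refine Finset.sum_congr rfl fun k _ => ?_
  simp only [Finset.sum_comm (s := (Finset.univ : Finset s)) (t := (Finset.univ : Finset e)),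
    Finset.sum_ite_eq', Finset.mem_univ, if_true]

lemma trace_mul_matLog_kronecker [DecidableEq s] [DecidableEq e] {A : Matrix s s ℂ}
    {B : Matrix e e ℂ} (hA : A.PosDef) (hB : B.PosDef) (ρ : Matrix (s × e) (s × e) ℂ) :
    (ρ * matLog (A ⊗ₖ B)).trace = (ptrE ρ * matLog A).trace + (ptrS ρ * matLog B).trace := by
  rw [matLog_kronecker hA hB, Matrix.mul_add, trace_add, trace_mul_kronecker_one,
    trace_mul_one_kronecker]

variable (s) in
def tensorKet [DecidableEq s] [DecidableEq e] (k : e) : Matrix (s × e) s ℂ :=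
  of fun p j => if p = (j, k) then 1 else 0

lemma ptrE_eq_sum_tensorKet [DecidableEq s] [DecidableEq e] (ρ : Matrix (s × e) (s × e) ℂ) :
    ptrE ρ = ∑ k : e, (tensorKet s k)ᴴ * ρ * tensorKet s k := by
  ext i j
  simp [ptrE, tensorKet, mul_apply, Matrix.sum_apply]

omit [Fintype e] in
lemma mulVec_tensorKet_injective [DecidableEq s] [DecidableEq e] (k : e) :
    Function.Injective (tensorKet s k).mulVec := by
  intro x y h
  funext j
  simpa [tensorKet, mulVec, dotProduct] using congrFun h (j, k)

lemma Matrix.PosDef.ptrE [DecidableEq s] [DecidableEq e] [Nonempty e]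
    {ρ : Matrix (s × e) (s × e) ℂ} (hρ : ρ.PosDef) : (ptrE ρ).PosDef := by
  obtain ⟨k⟩ := ‹Nonempty e›
  rw [ptrE_eq_sum_tensorKet, ← Finset.add_sum_erase _ _ (Finset.mem_univ k)]
  exact (hρ.conjTranspose_mul_mul_same (mulVec_tensorKet_injective k)).add_posSemidef
    (posSemidef_sum _ fun l _ => hρ.posSemidef.conjTranspose_mul_mul_same _)

end PartialTrace

section Klein

variable {n : Type*} [Fintype n]

lemma sub_le_mul_log_sub_log {x y : ℝ} (hx : 0 ≤ x) (hy : 0 < y) :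
    x - y ≤ x * (Real.log x - Real.log y) := by
  rcases hx.eq_or_lt with rfl | hx
  · simpa using hy.le
  · have h := mul_le_mul_of_nonneg_left (Real.log_le_sub_one_of_pos (div_pos hy hx)) hx.le
    rw [Real.log_div hy.ne' hx.ne', mul_sub x (y / x), mul_div_cancel₀ _ hx.ne'] at h
    linarith

lemma sum_sub_sum_le_of_doublyStochastic {p q : n → ℝ} {w : n → n → ℝ} (hp : ∀ i, 0 ≤ p i)
    (hq : ∀ j, 0 < q j) (hw : ∀ i j, 0 ≤ w i j) (hrow : ∀ i, ∑ j, w i j = 1)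
    (hcol : ∀ j, ∑ i, w i j = 1) :
    ∑ i, p i - ∑ j, q j
      ≤ ∑ i, p i * Real.log (p i) - ∑ i, ∑ j, p i * Real.log (q j) * w i j := by
  calc ∑ i, p i - ∑ j, q j = ∑ i, ∑ j, w i j * (p i - q j) := by
        simp only [mul_sub, Finset.sum_sub_distrib, ← Finset.sum_mul, hrow, one_mul]
        rw [Finset.sum_comm (f := fun i j => w i j * q j)]
        simp only [← Finset.sum_mul, hcol, one_mul]
    _ ≤ ∑ i, ∑ j, w i j * (p i * (Real.log (p i) - Real.log (q j))) :=
        Finset.sum_le_sum fun i _ => Finset.sum_le_sum fun j _ =>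
          mul_le_mul_of_nonneg_left (sub_le_mul_log_sub_log (hp i) (hq j)) (hw i j)
    _ = _ := by
        simp only [mul_sub, Finset.sum_sub_distrib]
        congr 1
        · refine Finset.sum_congr rfl fun i _ => ?_
          rw [← Finset.sum_mul, hrow, one_mul]
        · exact Finset.sum_congr rfl fun i _ => Finset.sum_congr rfl fun j _ => by ring

variable [DecidableEq n]

lemma sum_normSq_apply_right {C : Matrix n n ℂ} (hC : C ∈ unitaryGroup n ℂ) (i : n) :
    ∑ j, Complex.normSq (C i j) = 1 := by
  have h := congrFun (congrFun (mem_unitaryGroup_iff.mp hC) i) i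
  simp only [mul_apply, star_apply, Complex.star_def, Complex.mul_conj, one_apply_eq] at h
  exact_mod_cast h

lemma sum_normSq_apply_left {C : Matrix n n ℂ} (hC : C ∈ unitaryGroup n ℂ) (j : n) :
    ∑ i, Complex.normSq (C i j) = 1 := by
  have h := congrFun (congrFun (mem_unitaryGroup_iff'.mp hC) j) j
  simp only [mul_apply, star_apply, Complex.star_def, ← Complex.normSq_eq_conj_mul_self,
    one_apply_eq] at h
  exact_mod_cast h

lemma trace_diagonal_mul_mul_diagonal_mul_conjTranspose (C : Matrix n n ℂ) (a b : n → ℂ) :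
    (diagonal a * C * diagonal b * Cᴴ).trace = ∑ i, ∑ j, a i * b j * Complex.normSq (C i j) := by
  refine Finset.sum_congr rfl fun i _ => ?_
  rw [diag_apply, mul_apply]
  refine Finset.sum_congr rfl fun j _ => ?_
  rw [mul_diagonal, diagonal_mul, conjTranspose_apply, Complex.star_def,
    Complex.normSq_eq_conj_mul_self]
  ring

lemma trace_conj_diagonal_mul_conj_diagonal (V W : Matrix n n ℂ) (a b : n → ℂ) :
    ((V * diagonal a * Vᴴ) * (W * diagonal b * Wᴴ)).trace
      = ∑ i, ∑ j, a i * b j * Complex.normSq ((Vᴴ * W) i j) := by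
  rw [← trace_diagonal_mul_mul_diagonal_mul_conjTranspose, conjTranspose_mul,
    conjTranspose_conjTranspose]
  simp only [Matrix.mul_assoc]
  rw [trace_mul_comm V]
  simp only [Matrix.mul_assoc]

/-- Klein's inequality. -/
theorem re_trace_sub_le_relEnt {ρ σ : Matrix n n ℂ} (hρ : ρ.PosSemidef) (hσ : σ.PosDef) :
    (ρ.trace - σ.trace).re ≤ relEnt ρ σ := by
  set V : Matrix n n ℂ := ↑hρ.1.eigenvectorUnitary
  set W : Matrix n n ℂ := ↑hσ.1.eigenvectorUnitary
  set p := hρ.1.eigenvalues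
  set q := hσ.1.eigenvalues
  have hV : V ∈ unitaryGroup n ℂ := hρ.1.eigenvectorUnitary.2
  have hC : Vᴴ * W ∈ unitaryGroup n ℂ := mul_mem (Unitary.star_mem hV) hσ.1.eigenvectorUnitary.2
  have hself : (ρ * matLog ρ).trace = ∑ i, ((p i * Real.log (p i) : ℝ) : ℂ) := by
    rw [matLog_of_isHermitian hρ.1]
    nth_rewrite 1 [hρ.1.eq_unitary_conj_diagonal]
    rw [trace_conj_diagonal_mul_conj_diagonal, ← star_eq_conjTranspose,
      mem_unitaryGroup_iff'.mp hV]
    simp [one_apply, apply_ite (fun x : ℝ => (x : ℂ))]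
    rfl
  have hcross : (ρ * matLog σ).trace
      = ∑ i, ∑ j, ((p i * Real.log (q j) * Complex.normSq ((Vᴴ * W) i j) : ℝ) : ℂ) := by
    rw [matLog_of_isHermitian hσ.1]
    nth_rewrite 1 [hρ.1.eq_unitary_conj_diagonal]
    rw [trace_conj_diagonal_mul_conj_diagonal]
    push_cast
    rfl
  rw [relEnt, trace_sub, hself, hcross, hρ.1.trace_eq_sum_eigenvalues,
    hσ.1.trace_eq_sum_eigenvalues]
  simp only [Complex.sub_re, Complex.re_sum, Complex.ofReal_re]
  exact sum_sub_sum_le_of_doublyStochastic hρ.eigenvalues_nonneg hσ.eigenvalues_pos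
    (fun i j => Complex.normSq_nonneg _) (sum_normSq_apply_right hC) (sum_normSq_apply_left hC)

lemma relEnt_nonneg {ρ σ : Matrix n n ℂ} (hρ : ρ.PosSemidef) (hσ : σ.PosDef)
    (htr : ρ.trace = σ.trace) : 0 ≤ relEnt ρ σ := by
  simpa [htr] using re_trace_sub_le_relEnt hρ hσ

end Klein

section EntropyProduction

variable {s e : Type*} [Fintype s] [DecidableEq s] [Fintype e] [DecidableEq e]

/-- `Σ = ΔS_S + Φ` for the joint output `ρ'`, with entropy flux `Φ = Tr_E{(ρE - ρ'_E) log ρE}`. -/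
def entropyProduction (ρS : Matrix s s ℂ) (ρE : Matrix e e ℂ) (ρ' : Matrix (s × e) (s × e) ℂ) :
    ℝ :=
  (vnEntropy (ptrE ρ') - vnEntropy ρS) + (((ρE - ptrS ρ') * matLog ρE).trace).re

lemma trace_kronecker_mul_matLog_kronecker {ρ A : Matrix s s ℂ} {τ B : Matrix e e ℂ}
    (hA : A.PosDef) (hB : B.PosDef) (hρ : ρ.trace = 1) (hτ : τ.trace = 1) :
    ((ρ ⊗ₖ τ) * matLog (A ⊗ₖ B)).trace = (ρ * matLog A).trace + (τ * matLog B).trace := by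
  rw [trace_mul_matLog_kronecker hA hB, ptrE_kronecker, ptrS_kronecker, hρ, hτ, one_smul,
    one_smul]

theorem entropyProduction_eq_relEnt {ρS : Matrix s s ℂ} {ρE : Matrix e e ℂ}
    {U : Matrix (s × e) (s × e) ℂ} (hρS : ρS.PosDef) (hρStr : ρS.trace = 1) (hρE : ρE.PosDef)
    (hρEtr : ρE.trace = 1) (hU : U ∈ unitaryGroup (s × e) ℂ) :
    entropyProduction ρS ρE (U * (ρS ⊗ₖ ρE) * Uᴴ)
      = relEnt (U * (ρS ⊗ₖ ρE) * Uᴴ) (ptrE (U * (ρS ⊗ₖ ρE) * Uᴴ) ⊗ₖ ρE) := by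
  set ρ' := U * (ρS ⊗ₖ ρE) * Uᴴ
  have : Nonempty e := nonempty_of_trace_ne_zero (hρEtr ▸ one_ne_zero)
  have hent : (ρ' * matLog ρ').trace = (ρS * matLog ρS).trace + (ρE * matLog ρE).trace :=
    (trace_unitary_conj_mul_matLog_unitary_conj hU (hρS.kronecker hρE).1).trans
      (trace_kronecker_mul_matLog_kronecker hρS hρE hρStr hρEtr)
  have hcross : (ρ' * matLog (ptrE ρ' ⊗ₖ ρE)).trace
      = (ptrE ρ' * matLog (ptrE ρ')).trace + (ptrS ρ' * matLog ρE).trace :=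
    trace_mul_matLog_kronecker ((hρS.kronecker hρE).unitary_conj hU).ptrE hρE ρ'
  simp only [entropyProduction, relEnt, vnEntropy, trace_sub, sub_mul, hent, hcross,
    Complex.add_re, Complex.sub_re, Complex.neg_re]
  ring

theorem entropyProduction_nonneg {ρS : Matrix s s ℂ} {ρE : Matrix e e ℂ}
    {U : Matrix (s × e) (s × e) ℂ} (hρS : ρS.PosDef) (hρStr : ρS.trace = 1) (hρE : ρE.PosDef)
    (hρEtr : ρE.trace = 1) (hU : U ∈ unitaryGroup (s × e) ℂ) :
    0 ≤ entropyProduction ρS ρE (U * (ρS ⊗ₖ ρE) * Uᴴ) := by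
  have : Nonempty e := nonempty_of_trace_ne_zero (hρEtr ▸ one_ne_zero)
  have hρ' := (hρS.kronecker hρE).unitary_conj hU
  rw [entropyProduction_eq_relEnt hρS hρStr hρE hρEtr hU]
  exact relEnt_nonneg hρ'.posSemidef (hρ'.ptrE.kronecker hρE)
    (by rw [trace_kronecker, trace_ptrE, hρEtr, mul_one])

theorem entropyProduction_eq_sub_relEnt_of_fixedPoint {ρS ρStar : Matrix s s ℂ}
    {ρE : Matrix e e ℂ} {U : Matrix (s × e) (s × e) ℂ} (hρStr : ρS.trace = 1)
    (hρStar : ρStar.PosDef) (hρE : ρE.PosDef) (hρEtr : ρE.trace = 1)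
    (hU : U ∈ unitaryGroup (s × e) ℂ) (hfix : U * (ρStar ⊗ₖ ρE) * Uᴴ = ρStar ⊗ₖ ρE) :
    entropyProduction ρS ρE (U * (ρS ⊗ₖ ρE) * Uᴴ)
      = relEnt ρS ρStar - relEnt (ptrE (U * (ρS ⊗ₖ ρE) * Uᴴ)) ρStar := by
  set ρ' := U * (ρS ⊗ₖ ρE) * Uᴴ
  have hexchange : (ptrE ρ' * matLog ρStar).trace + (ptrS ρ' * matLog ρE).trace
      = (ρS * matLog ρStar).trace + (ρE * matLog ρE).trace := by
    -- `U` fixes `ρ*_S ⊗ ρE`, hence commutes with its logarithm `log ρ*_S ⊗ 1 + 1 ⊗ log ρE`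
    rw [← trace_mul_matLog_kronecker hρStar hρE,
      ← trace_kronecker_mul_matLog_kronecker hρStar hρE hρStr hρEtr]
    conv_lhs => rw [← hfix]
    exact trace_unitary_conj_mul_matLog_unitary_conj hU (hρStar.kronecker hρE).1
  have hexchange_re := congrArg Complex.re hexchange
  simp only [entropyProduction, relEnt, vnEntropy, trace_sub, sub_mul, Complex.add_re,
    Complex.sub_re, Complex.neg_re] at hexchange_re ⊢
  linarith

end EntropyProduction

theorem entropy_production_fixed_point_general
    {s e : Type*} [Fintype s] [DecidableEq s] [Fintype e] [DecidableEq e]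
    (ρS ρStar : Matrix s s ℂ) (ρE : Matrix e e ℂ) (U : Matrix (s × e) (s × e) ℂ)
    (hρS : ρS.PosDef) (hρStr : ρS.trace = 1)
    (hρStar : ρStar.PosDef)
    (hρE : ρE.PosDef) (hρEtr : ρE.trace = 1)
    (hU : U ∈ Matrix.unitaryGroup (s × e) ℂ)
    (hfix : U * (ρStar ⊗ₖ ρE) * Uᴴ = ρStar ⊗ₖ ρE)
    (ρ' : Matrix (s × e) (s × e) ℂ) (hρ' : ρ' = U * (ρS ⊗ₖ ρE) * Uᴴ) :
    ((vnEntropy (ptrE ρ') - vnEntropy ρS) + (((ρE - ptrS ρ') * matLog ρE).trace).re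
        = relEnt ρS ρStar - relEnt (ptrE ρ') ρStar)
      ∧ relEnt (ptrE ρ') ρStar ≤ relEnt ρS ρStar := by
  subst hρ'
  have hfixed := entropyProduction_eq_sub_relEnt_of_fixedPoint hρStr hρStar hρE hρEtr hU hfix
  have hnonneg := entropyProduction_nonneg hρS hρStr hρE hρEtr hU
  refine ⟨hfixed, ?_⟩
  linarith

/-- If `ρ*_S` is a global fixed point, `U (ρ*_S ⊗ ρE) U† = ρ*_S ⊗ ρE`,
then the entropy production `Σ = ΔS_S + Φ` (with entropy flux
`Φ = Tr_E{(ρE - ρ'_E) log ρE}`) satisfies `Σ = S(ρS‖ρ*_S) - S(ρ'_S‖ρ*_S)`, and in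
particular `S(ρ'_S‖ρ*_S) ≤ S(ρS‖ρ*_S)`. -/
theorem entropy_production_fixed_point
    {s e : Type*} [Fintype s] [DecidableEq s] [Fintype e] [DecidableEq e]
    (ρS ρStar : Matrix s s ℂ) (ρE : Matrix e e ℂ) (U : Matrix (s × e) (s × e) ℂ)
    (hρS : ρS.PosDef) (hρStr : ρS.trace = 1)
    (hρStar : ρStar.PosDef) (hρStarTr : ρStar.trace = 1)
    (hρE : ρE.PosDef) (hρEtr : ρE.trace = 1)
    (hU : U ∈ Matrix.unitaryGroup (s × e) ℂ)
    (hfix : U * (ρStar ⊗ₖ ρE) * Uᴴ = ρStar ⊗ₖ ρE)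
    (ρ' : Matrix (s × e) (s × e) ℂ) (hρ' : ρ' = U * (ρS ⊗ₖ ρE) * Uᴴ) :
    ((vnEntropy (ptrE ρ') - vnEntropy ρS) + (((ρE - ptrS ρ') * matLog ρE).trace).re
        = relEnt ρS ρStar - relEnt (ptrE ρ') ρStar)
      ∧ relEnt (ptrE ρ') ρStar ≤ relEnt ρS ρStar :=
  entropy_production_fixed_point_general ρS ρStar ρE U hρS hρStr hρStar hρE hρEtr hU hfix ρ' hρ'
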